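/- arXiv:2408.08240 — 2 statements merged into one kernel-verified Lean document; each statement's English description precedes it below -/
import Mathlib

section
/- Let H ∈ (0, 1], ε > 0, and let B be a fractional Brownian motion with Hurst parameter H. Define X(t) := ε·(B(t) − e^{−t} ∫_0^t e^u B(u) du). Then for every t ≥ 0, E[ X(t)² ] = ε²·( t^{2H} e^{−t} + (1/2)·∫_0^t u^{2H} ( e^{−u} − e^{u − 2t} ) du ). -/
/-!
Write `S = ∫₀ᵗ eᵘ B u du`, so that `X t = ε (B t - e⁻ᵗ S)` and
`E[X t ²] = ε² (E[B t²] - 2 e⁻ᵗ E[B t S] + e⁻²ᵗ E[S²])`. Both `B t` and `S` are integrals of the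
path against finite measures carried by `[0, t]`, and since the second moments of `B` are bounded
there, Fubini turns `E[B t S]` and `E[S²]` into single and double integrals of the covariance
`R(u, v) = (f u + f v - f |u - v|) / 2`, `f u = u ^ (2H)`. What remains is calculus, valid for any
continuous `f`: with `I = ∫₀ᵗ eᵘ f u du` and `J = ∫₀ᵗ e⁻ᵘ f u du`, splitting the inner integral at
`v = u` and integrating by parts gives `∫₀ᵗ∫₀ᵗ eᵘ⁺ᵛ f |u - v| dv du = e²ᵗ J - I`, and the terms
collapse to `f t e⁻ᵗ + (J - e⁻²ᵗ I) / 2`.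
-/

open MeasureTheory ProbabilityTheory Real

/-- A fractional Brownian motion with Hurst parameter `H` on the probability space
`(Ω, P)`: a process with continuous sample paths such that every finite linear
combination of its values (at nonnegative times) is a centered Gaussian random
variable, and with covariance `E[B s · B t] = (t^{2H} + s^{2H} - |t-s|^{2H})/2`. -/
def IsFractionalBrownianMotion {Ω : Type*} [MeasurableSpace Ω] (P : Measure Ω)
    (H : ℝ) (B : ℝ → Ω → ℝ) : Prop :=
  (∀ t : ℝ, 0 ≤ t → Measurable (B t)) ∧
  (∀ ω : Ω, Continuous fun t => B t ω) ∧
  (∀ (n : ℕ) (t : Fin n → ℝ), (∀ i, 0 ≤ t i) → ∀ c : Fin n → ℝ,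
    ∃ v : NNReal,
      Measure.map (fun ω => ∑ i, c i * B (t i) ω) P = gaussianReal 0 v) ∧
  (∀ s t : ℝ, 0 ≤ s → 0 ≤ t →
    ∫ ω, B s ω * B t ω ∂P = (1 / 2) * (t ^ (2 * H) + s ^ (2 * H) - |t - s| ^ (2 * H)))

section SecondMoments

variable {α β Ω : Type*} [MeasurableSpace α] [MeasurableSpace β] [MeasurableSpace Ω]
  {μ : Measure α} {ν : Measure β} {P : Measure Ω} {Y : α → Ω → ℝ} {Z : β → Ω → ℝ}

lemma integral_norm_mul_le_of_memLp_two {f g : Ω → ℝ} (hf : MemLp f 2 P) (hg : MemLp g 2 P) :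
    ∫ ω, ‖f ω * g ω‖ ∂P ≤ (∫ ω, f ω ^ 2 ∂P + ∫ ω, g ω ^ 2 ∂P) / 2 := by
  rw [← integral_add hf.integrable_sq hg.integrable_sq, ← integral_div]
  refine integral_mono_of_nonneg (ae_of_all _ fun _ => norm_nonneg _)
    ((hf.integrable_sq.add hg.integrable_sq).div_const 2) (ae_of_all _ fun ω => ?_)
  have := two_mul_le_add_sq |f ω| |g ω|
  simp only [norm_mul, Real.norm_eq_abs, sq_abs] at this ⊢
  linarith

lemma integrable_prod_mul_of_memLp_two [IsFiniteMeasure μ] [IsFiniteMeasure ν] [SFinite P]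
    (hYm : Measurable (Function.uncurry Y)) (hZm : Measurable (Function.uncurry Z))
    (hY : ∀ a, MemLp (Y a) 2 P) (hZ : ∀ b, MemLp (Z b) 2 P) {C D : ℝ}
    (hYC : ∀ᵐ a ∂μ, ∫ ω, Y a ω ^ 2 ∂P ≤ C) (hZD : ∀ᵐ b ∂ν, ∫ ω, Z b ω ^ 2 ∂P ≤ D) :
    Integrable (fun q : (α × β) × Ω => Y q.1.1 q.2 * Z q.1.2 q.2) ((μ.prod ν).prod P) := by
  have hm : Measurable fun q : (α × β) × Ω => Y q.1.1 q.2 * Z q.1.2 q.2 :=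
    (hYm.comp (measurable_fst.fst.prodMk measurable_snd)).mul
      (hZm.comp (measurable_fst.snd.prodMk measurable_snd))
  refine (integrable_prod_iff hm.aestronglyMeasurable).2
    ⟨ae_of_all _ fun p => (hY p.1).integrable_mul (hZ p.2), ?_⟩
  refine (integrable_const ((C + D) / 2)).mono'
    hm.norm.stronglyMeasurable.integral_prod_right'.aestronglyMeasurable ?_
  filter_upwards [Measure.quasiMeasurePreserving_fst.ae hYC,
    Measure.quasiMeasurePreserving_snd.ae hZD] with p hp1 hp2
  rw [Real.norm_of_nonneg (integral_nonneg fun _ => norm_nonneg _)]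
  linarith [integral_norm_mul_le_of_memLp_two (hY p.1) (hZ p.2)]

lemma integral_integral_mul_integral_of_memLp_two [IsFiniteMeasure μ] [IsFiniteMeasure ν]
    [SFinite P]
    (hYm : Measurable (Function.uncurry Y)) (hZm : Measurable (Function.uncurry Z))
    (hY : ∀ a, MemLp (Y a) 2 P) (hZ : ∀ b, MemLp (Z b) 2 P) {C D : ℝ}
    (hYC : ∀ᵐ a ∂μ, ∫ ω, Y a ω ^ 2 ∂P ≤ C) (hZD : ∀ᵐ b ∂ν, ∫ ω, Z b ω ^ 2 ∂P ≤ D) :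
    Integrable (fun ω => (∫ a, Y a ω ∂μ) * ∫ b, Z b ω ∂ν) P ∧
      ∫ ω, (∫ a, Y a ω ∂μ) * (∫ b, Z b ω ∂ν) ∂P = ∫ a, ∫ b, ∫ ω, Y a ω * Z b ω ∂P ∂ν ∂μ := by
  have hint := integrable_prod_mul_of_memLp_two hYm hZm hY hZ hYC hZD
  have hprod : ∀ ω, (∫ a, Y a ω ∂μ) * (∫ b, Z b ω ∂ν)
      = ∫ p, Y p.1 ω * Z p.2 ω ∂(μ.prod ν) := fun ω =>
    (integral_prod_mul (fun a => Y a ω) (fun b => Z b ω)).symm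
  simp only [hprod]
  refine ⟨hint.integral_prod_right, ?_⟩
  rw [← integral_integral_swap hint]
  exact integral_prod _ hint.integral_prod_left

lemma integral_sub_mul_sq {f g : Ω → ℝ} (hf : Integrable (fun ω => f ω ^ 2) P)
    (hfg : Integrable (fun ω => f ω * g ω) P) (hg : Integrable (fun ω => g ω * g ω) P) (c : ℝ) :
    ∫ ω, (f ω - c * g ω) ^ 2 ∂P
      = ∫ ω, f ω ^ 2 ∂P - 2 * c * ∫ ω, f ω * g ω ∂P + c ^ 2 * ∫ ω, g ω * g ω ∂P := by
  have hexpand (ω : Ω) : (f ω - c * g ω) ^ 2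
      = f ω ^ 2 - 2 * c * (f ω * g ω) + c ^ 2 * (g ω * g ω) := by ring
  have hfg' : Integrable (fun ω => f ω ^ 2 - 2 * c * (f ω * g ω)) P := hf.sub (hfg.const_mul _)
  rw [integral_congr_ae (ae_of_all _ hexpand), integral_add hfg' (hg.const_mul _),
    integral_sub hf (hfg.const_mul _), integral_const_mul, integral_const_mul]

end SecondMoments

lemma integral_exp_mul_comp_sub (φ : ℝ → ℝ) (c a : ℝ) :
    ∫ u in 0..a, exp (c * u) * φ (a - u) = exp (c * a) * ∫ u in 0..a, exp (-(c * u)) * φ u := by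
  have h (u : ℝ) : exp (c * u) * φ (a - u) = exp (c * a) * (exp (-(c * (a - u))) * φ (a - u)) := by
    rw [← mul_assoc, ← exp_add]; ring_nf
  simp only [h, intervalIntegral.integral_const_mul,
    intervalIntegral.integral_comp_sub_left (fun w => exp (-(c * w)) * φ w), sub_self, sub_zero]

lemma integral_exp_mul_comp_sub_right (φ : ℝ → ℝ) (a b : ℝ) :
    ∫ v in a..b, exp v * φ (v - a) = exp a * ∫ w in 0..b - a, exp w * φ w := by
  have h (v : ℝ) : exp v * φ (v - a) = exp a * (exp (v - a) * φ (v - a)) := by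
    rw [← mul_assoc, ← exp_add]; ring_nf
  simp only [h, intervalIntegral.integral_const_mul,
    intervalIntegral.integral_comp_sub_right (fun w => exp w * φ w), sub_self]

lemma integral_exp_mul_primitive {g : ℝ → ℝ} (hg : Continuous g) {c : ℝ} (hc : c ≠ 0) (t : ℝ) :
    ∫ u in 0..t, exp (c * u) * ∫ w in 0..u, g w
      = (exp (c * t) * (∫ w in 0..t, g w) - ∫ u in 0..t, exp (c * u) * g u) / c := by
  have hG (x : ℝ) : HasDerivAt (fun u => ∫ w in 0..u, g w) (g x) x :=
    (hg.integral_hasStrictDerivAt 0 x).hasDerivAt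
  have hE (x : ℝ) : HasDerivAt (fun u => exp (c * u) / c) (exp (c * x)) x := by
    have h := ((hasDerivAt_id' x).const_mul c).exp.div_const c
    rwa [mul_one, mul_div_cancel_right₀ _ hc] at h
  have hparts := intervalIntegral.integral_mul_deriv_eq_deriv_mul (fun x _ => hG x)
    (fun x _ => hE x) (hg.intervalIntegrable 0 t)
    ((by fun_prop : Continuous fun u => exp (c * u)).intervalIntegrable 0 t)
  simp only [intervalIntegral.integral_same, zero_mul, sub_zero] at hparts
  simp only [mul_comm (exp _), hparts, mul_div_assoc', intervalIntegral.integral_div]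
  ring

lemma integral_exp_mul_abs_sub {f : ℝ → ℝ} (hf : Continuous f) {u t : ℝ} (hu : 0 ≤ u)
    (hut : u ≤ t) :
    ∫ v in 0..t, exp v * f |v - u|
      = exp u * ((∫ w in 0..u, exp (-w) * f w) + ∫ w in 0..t - u, exp w * f w) := by
  have hi (a b : ℝ) : IntervalIntegrable (fun v => exp v * f |v - u|) volume a b :=
    (by fun_prop : Continuous _).intervalIntegrable a b
  rw [← intervalIntegral.integral_add_adjacent_intervals (hi 0 u) (hi u t), mul_add]
  congr 1
  · rw [intervalIntegral.integral_congr (g := fun v => exp (1 * v) * f (u - v)) fun v hv => by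
      rw [Set.uIcc_of_le hu] at hv
      simp only [one_mul, abs_of_nonpos (sub_nonpos.2 hv.2), neg_sub]]
    simpa only [one_mul] using integral_exp_mul_comp_sub f 1 u
  · rw [intervalIntegral.integral_congr (g := fun v => exp v * f (v - u)) fun v hv => by
      rw [Set.uIcc_of_le hut] at hv
      simp only [abs_of_nonneg (sub_nonneg.2 hv.1)]]
    exact integral_exp_mul_comp_sub_right f u t

lemma integral_exp_mul_integral_exp_mul_abs_sub {f : ℝ → ℝ} (hf : Continuous f) {t : ℝ}
    (ht : 0 ≤ t) :
    ∫ u in 0..t, exp u * ∫ v in 0..t, exp v * f |v - u|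
      = exp (2 * t) * (∫ u in 0..t, exp (-u) * f u) - ∫ u in 0..t, exp u * f u := by
  set L : ℝ → ℝ := fun s => ∫ w in 0..s, exp (-w) * f w
  set K : ℝ → ℝ := fun s => ∫ w in 0..s, exp w * f w
  have hL : ∫ u in 0..t, exp (2 * u) * L u = (exp (2 * t) * L t - K t) / 2 := by
    rw [integral_exp_mul_primitive (by fun_prop) two_ne_zero]
    congr 2
    refine intervalIntegral.integral_congr fun w _ => ?_
    rw [← mul_assoc, ← exp_add]; ring_nf
  have hK : ∫ u in 0..t, exp (2 * u) * K (t - u) = (exp (2 * t) * L t - K t) / 2 := by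
    rw [integral_exp_mul_comp_sub K 2 t]
    simp only [← neg_mul]
    rw [integral_exp_mul_primitive (by fun_prop) (by norm_num : (-2 : ℝ) ≠ 0)]
    have hKL : ∫ u in 0..t, exp (-2 * u) * (exp u * f u) = L t :=
      intervalIntegral.integral_congr fun w _ => by rw [← mul_assoc, ← exp_add]; ring_nf
    have h2t : exp (2 * t) * exp (-2 * t) = 1 := by rw [← exp_add]; simp
    rw [hKL]
    linear_combination (-(∫ w in 0..t, exp w * f w) / 2) * h2t
  have hsplit : ∀ u ∈ Set.uIcc 0 t, exp u * ∫ v in 0..t, exp v * f |v - u|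
      = exp (2 * u) * L u + exp (2 * u) * K (t - u) := fun u hu => by
    rw [Set.uIcc_of_le ht] at hu
    rw [integral_exp_mul_abs_sub hf hu.1 hu.2, ← mul_assoc, ← exp_add, two_mul, mul_add]
  rw [intervalIntegral.integral_congr hsplit, intervalIntegral.integral_add
    ((by fun_prop : Continuous _).intervalIntegrable 0 t)
    ((by fun_prop : Continuous _).intervalIntegrable 0 t), hL, hK]
  ring

/-- The covariance of a centred process with `B 0 = 0`, stationary increments and
`E[B t ^ 2] = f t`; fractional Brownian motion is the case `f = (· ^ (2 * H))`. -/
noncomputable def stationaryIncrementsCov (f : ℝ → ℝ) (s t : ℝ) : ℝ :=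
  (1 / 2) * (f t + f s - f |t - s|)

lemma integral_exp_mul_stationaryIncrementsCov {f : ℝ → ℝ} (hf : Continuous f) (t u : ℝ) :
    ∫ v in 0..t, exp v * stationaryIncrementsCov f u v
      = (1 / 2) * ((∫ v in 0..t, exp v * f v) + f u * (exp t - 1)
          - ∫ v in 0..t, exp v * f |v - u|) := by
  have hi {g : ℝ → ℝ} (hg : Continuous g) : IntervalIntegrable g volume 0 t :=
    hg.intervalIntegrable 0 t
  have hsplit : (fun v => exp v * stationaryIncrementsCov f u v)
      = fun v => (1 / 2) * (exp v * f v + f u * exp v - exp v * f |v - u|) := by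
    ext v; simp only [stationaryIncrementsCov]; ring
  rw [hsplit, intervalIntegral.integral_const_mul,
    intervalIntegral.integral_sub ((hi (by fun_prop)).add (hi (by fun_prop))) (hi (by fun_prop)),
    intervalIntegral.integral_add (hi (by fun_prop)) (hi (by fun_prop)),
    intervalIntegral.integral_const_mul, integral_exp, exp_zero]

theorem stationaryIncrementsCov_ou_expansion {f : ℝ → ℝ} (hf : Continuous f) {t : ℝ}
    (ht : 0 ≤ t) :
    f t - 2 * exp (-t) * (∫ v in 0..t, exp v * stationaryIncrementsCov f t v)
        + exp (-t) ^ 2 * ∫ u in 0..t, exp u * ∫ v in 0..t, exp v * stationaryIncrementsCov f u v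
      = f t * exp (-t) + (1 / 2) * ∫ u in 0..t, f u * (exp (-u) - exp (u - 2 * t)) := by
  have hi {g : ℝ → ℝ} (hg : Continuous g) : IntervalIntegrable g volume 0 t :=
    hg.intervalIntegrable 0 t
  set I := ∫ u in 0..t, exp u * f u
  set J := ∫ u in 0..t, exp (-u) * f u
  have hdiag : ∫ v in 0..t, exp v * stationaryIncrementsCov f t v
      = (1 / 2) * (I + f t * (exp t - 1) - exp t * J) := by
    rw [integral_exp_mul_stationaryIncrementsCov hf, integral_exp_mul_abs_sub hf ht le_rfl,
      sub_self, intervalIntegral.integral_same, add_zero]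
  have hdouble : ∫ u in 0..t, exp u * ∫ v in 0..t, exp v * stationaryIncrementsCov f u v
      = (1 / 2) * (2 * (exp t - 1) * I - (exp (2 * t) * J - I)) := by
    have hsplit : (fun u => exp u * ∫ v in 0..t, exp v * stationaryIncrementsCov f u v)
        = fun u => (1 / 2) * (I * exp u + (exp t - 1) * (exp u * f u)
            - exp u * ∫ v in 0..t, exp v * f |v - u|) := by
      ext u; rw [integral_exp_mul_stationaryIncrementsCov hf]; ring
    have hc : Continuous fun u => exp u * ∫ v in 0..t, exp v * f |v - u| := by fun_prop
    rw [hsplit, intervalIntegral.integral_const_mul,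
      intervalIntegral.integral_sub ((hi (by fun_prop)).add (hi (by fun_prop))) (hi hc),
      intervalIntegral.integral_add (hi (by fun_prop)) (hi (by fun_prop)),
      intervalIntegral.integral_const_mul, intervalIntegral.integral_const_mul, integral_exp,
      exp_zero, integral_exp_mul_integral_exp_mul_abs_sub hf ht]
    ring
  have htarget : ∫ u in 0..t, f u * (exp (-u) - exp (u - 2 * t)) = J - exp (-t) ^ 2 * I := by
    have hsplit : (fun u => f u * (exp (-u) - exp (u - 2 * t)))
        = fun u => exp (-u) * f u - exp (-t) ^ 2 * (exp u * f u) := by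
      ext u
      rw [show exp (u - 2 * t) = exp (-t) ^ 2 * exp u by rw [← exp_nat_mul, ← exp_add]; ring_nf]
      ring
    rw [hsplit, intervalIntegral.integral_sub (hi (by fun_prop)) (hi (by fun_prop)),
      intervalIntegral.integral_const_mul]
  have he : exp (-t) * exp t = 1 := by rw [← exp_add, neg_add_cancel, exp_zero]
  rw [hdiag, hdouble, htarget, show exp (2 * t) = exp t ^ 2 by rw [← exp_nat_mul]; ring_nf]
  linear_combination (exp (-t) * I - f t - (1 / 2) * J * (exp (-t) * exp t - 1)) * he

/-- `∫ u in 0..t, exp u * B u ω` is the integral of the path against this measure, just as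
`B t ω` is its integral against `dirac t`. -/
noncomputable def expWeight (t : ℝ) : Measure ℝ :=
  (volume.restrict (Set.Ioc 0 t)).withDensity fun u => ENNReal.ofReal (exp u)

instance (t : ℝ) : IsFiniteMeasure (expWeight t) :=
  isFiniteMeasure_withDensity_ofReal continuous_exp.integrableOn_Ioc.hasFiniteIntegral

lemma ae_expWeight_mem_Icc (t : ℝ) : ∀ᵐ u ∂expWeight t, u ∈ Set.Icc 0 t :=
  withDensity_absolutelyContinuous _ _ <|
    (ae_restrict_mem measurableSet_Ioc).mono fun _ hu => Set.Ioc_subset_Icc_self hu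

lemma integral_expWeight {t : ℝ} (ht : 0 ≤ t) (g : ℝ → ℝ) :
    ∫ u, g u ∂expWeight t = ∫ u in 0..t, exp u * g u := by
  rw [expWeight, integral_withDensity_eq_integral_toReal_smul (by fun_prop)
    (ae_of_all _ fun _ => ENNReal.ofReal_lt_top), intervalIntegral.integral_of_le ht]
  simp only [ENNReal.toReal_ofReal (exp_pos _).le, smul_eq_mul]

namespace IsFractionalBrownianMotion

variable {Ω : Type*} [MeasurableSpace Ω] {P : Measure Ω} {H : ℝ} {B : ℝ → Ω → ℝ}

lemma memLp_two (hB : IsFractionalBrownianMotion P H B) {t : ℝ} (ht : 0 ≤ t) :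
    MemLp (B t) 2 P := by
  obtain ⟨v, hv⟩ := hB.2.2.1 1 (fun _ => t) (fun _ => ht) (fun _ => 1)
  simp only [Finset.univ_unique, Fin.default_eq_zero, one_mul, Finset.sum_singleton] at hv
  have hBt : Measurable (B t) := hB.1 t ht
  have hid : MemLp id 2 (Measure.map (B t) P) := hv ▸ memLp_id_gaussianReal 2
  exact (memLp_map_measure_iff aestronglyMeasurable_id hBt.aemeasurable).1 hid

lemma integral_sq (hB : IsFractionalBrownianMotion P H B) (hH : 0 < H) {t : ℝ} (ht : 0 ≤ t) :
    ∫ ω, B t ω ^ 2 ∂P = t ^ (2 * H) := by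
  simp only [sq, hB.2.2.2 t t ht ht, sub_self, abs_zero, Real.zero_rpow (by positivity : 2 * H ≠ 0)]
  ring

lemma measurable_uncurry_max (hB : IsFractionalBrownianMotion P H B) :
    Measurable (Function.uncurry fun u ω => B (max u 0) ω) :=
  measurable_uncurry_of_continuous_of_measurable
    (fun ω => (hB.2.1 ω).comp (continuous_id.max continuous_const))
    (fun u => hB.1 _ (le_max_right u 0))

theorem integral_integral_mul_integral (hB : IsFractionalBrownianMotion P H B) (hH : 0 < H)
    [SFinite P] {μ ν : Measure ℝ} [IsFiniteMeasure μ] [IsFiniteMeasure ν] {T : ℝ}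
    (hμ : ∀ᵐ u ∂μ, u ∈ Set.Icc 0 T) (hν : ∀ᵐ v ∂ν, v ∈ Set.Icc 0 T) :
    Integrable (fun ω => (∫ u, B u ω ∂μ) * ∫ v, B v ω ∂ν) P ∧
      ∫ ω, (∫ u, B u ω ∂μ) * (∫ v, B v ω ∂ν) ∂P
        = ∫ u, ∫ v, stationaryIncrementsCov (· ^ (2 * H)) u v ∂ν ∂μ := by
  -- `B u` need not be measurable for `u < 0`; the truncated process is jointly measurable and
  -- agrees with `B` where `μ` and `ν` live.
  have hQ (u : ℝ) : MemLp (B (max u 0)) 2 P := hB.memLp_two (le_max_right u 0)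
  have hbound {ρ : Measure ℝ} (hρ : ∀ᵐ u ∂ρ, u ∈ Set.Icc 0 T) :
      ∀ᵐ u ∂ρ, ∫ ω, B (max u 0) ω ^ 2 ∂P ≤ T ^ (2 * H) := by
    filter_upwards [hρ] with u hu
    rw [max_eq_left hu.1, hB.integral_sq hH hu.1]
    exact Real.rpow_le_rpow hu.1 hu.2 (by positivity)
  have hmax {ρ : Measure ℝ} (hρ : ∀ᵐ u ∂ρ, u ∈ Set.Icc 0 T) (ω : Ω) :
      ∫ u, B (max u 0) ω ∂ρ = ∫ u, B u ω ∂ρ :=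
    integral_congr_ae (by filter_upwards [hρ] with u hu; rw [max_eq_left hu.1])
  obtain ⟨hint, heq⟩ := integral_integral_mul_integral_of_memLp_two hB.measurable_uncurry_max
    hB.measurable_uncurry_max hQ hQ (hbound hμ) (hbound hν)
  simp only [hmax hμ, hmax hν] at hint heq
  refine ⟨hint, heq.trans (integral_congr_ae ?_)⟩
  filter_upwards [hμ] with u hu
  refine integral_congr_ae ?_
  filter_upwards [hν] with v hv
  simp only [max_eq_left hu.1, max_eq_left hv.1, hB.2.2.2 u v hu.1 hv.1, stationaryIncrementsCov]

end IsFractionalBrownianMotion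

theorem fOU_second_moment_formula_general {Ω : Type*} [MeasurableSpace Ω]
    (P : Measure Ω) [IsProbabilityMeasure P]
    (H ε : ℝ) (hH : H ∈ Set.Ioc (0 : ℝ) 1)
    (B : ℝ → Ω → ℝ) (hB : IsFractionalBrownianMotion P H B)
    (X : ℝ → Ω → ℝ)
    (hX : ∀ t ω, X t ω
      = ε * (B t ω - Real.exp (-t) * ∫ u in (0:ℝ)..t, Real.exp u * B u ω))
    (t : ℝ) (ht : 0 ≤ t) :
    ∫ ω, (X t ω) ^ 2 ∂P
      = ε ^ 2 * (t ^ (2 * H) * Real.exp (-t)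
          + (1 / 2) * ∫ u in (0:ℝ)..t, u ^ (2 * H) * (Real.exp (-u) - Real.exp (u - 2 * t))) := by
  have hdirac : ∀ᵐ u ∂Measure.dirac t, u ∈ Set.Icc 0 t := by
    rw [ae_dirac_eq]; exact ⟨ht, le_rfl⟩
  obtain ⟨hint₁, hE₁⟩ := hB.integral_integral_mul_integral hH.1 hdirac (ae_expWeight_mem_Icc t)
  obtain ⟨hint₂, hE₂⟩ := hB.integral_integral_mul_integral hH.1 (ae_expWeight_mem_Icc t)
    (ae_expWeight_mem_Icc t)
  simp only [integral_dirac, integral_expWeight ht] at hint₁ hE₁ hint₂ hE₂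
  simp only [hX, mul_pow, integral_const_mul]
  rw [integral_sub_mul_sq (hB.memLp_two ht).integrable_sq hint₁ hint₂, hB.integral_sq hH.1 ht,
    hE₁, hE₂, stationaryIncrementsCov_ou_expansion (continuous_rpow_const (by linarith [hH.1])) ht]

theorem fOU_second_moment_formula {Ω : Type*} [MeasurableSpace Ω]
    (P : Measure Ω) [IsProbabilityMeasure P]
    (H ε : ℝ) (hH : H ∈ Set.Ioc (0 : ℝ) 1) (hε : 0 < ε)
    (B : ℝ → Ω → ℝ) (hB : IsFractionalBrownianMotion P H B)
    (X : ℝ → Ω → ℝ)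
    (hX : ∀ t ω, X t ω
      = ε * (B t ω - Real.exp (-t) * ∫ u in (0:ℝ)..t, Real.exp u * B u ω))
    (t : ℝ) (ht : 0 ≤ t) :
    ∫ ω, (X t ω) ^ 2 ∂P
      = ε ^ 2 * (t ^ (2 * H) * Real.exp (-t)
          + (1 / 2) * ∫ u in (0:ℝ)..t, u ^ (2 * H) * (Real.exp (-u) - Real.exp (u - 2 * t))) :=
  fOU_second_moment_formula_general P H ε hH B hB X hX t ht
end

section
/- Let H > 0 and t ≥ 0. Then t^{2H} − 2 e^{−t} ∫_0^t (1/2)( t^{2H} + u^{2H} − (t−u)^{2H} ) e^{u} du + e^{−2t} ∫_0^t ∫_0^t (1/2)( u^{2H} + s^{2H} − |u−s|^{2H} ) e^{u+s} ds du = t^{2H} e^{−t} + (1/2) ∫_0^t u^{2H} ( e^{−u} − e^{u−2t} ) du. -/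
open MeasureTheory Real

/-!
The identity holds with `u ^ (2 * H)` replaced by any continuous `f`, the covariance being
`½ (f u + f s - f |u - s|)`. Every integral then reduces to `P = ∫₀ᵗ f v eᵛ dv` and
`N = ∫₀ᵗ f v e⁻ᵛ dv`: the term `f (t - u)` through the reflection `u ↦ t - u`, and the double
integral of `f |u - s|` by splitting the inner integral at `s = u` and integrating the two
resulting primitives by parts against `e^{±2u}`, which gives `e^{2t} N - P`. Both sides then
equal `f t e⁻ᵗ + (N - e^{-2t} P) / 2`.
-/

lemma integral_comp_sub_mul_exp (h : ℝ → ℝ) (c t : ℝ) :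
    ∫ u in (0:ℝ)..t, h (t - u) * exp (c * u)
      = exp (c * t) * ∫ v in (0:ℝ)..t, h v * exp (-c * v) := by
  have := intervalIntegral.integral_comp_sub_left (fun v => h v * exp (c * (t - v)))
    (a := 0) (b := t) t
  simp only [sub_sub_cancel, sub_self, sub_zero] at this
  rw [this, ← intervalIntegral.integral_const_mul]
  congr 1 with v
  rw [mul_sub, exp_sub, neg_mul, exp_neg]
  ring

lemma integral_primitive_mul_exp {g : ℝ → ℝ} (hg : Continuous g) {c : ℝ} (hc : c ≠ 0) (t : ℝ) :
    ∫ u in (0:ℝ)..t, (∫ v in (0:ℝ)..u, g v) * exp (c * u)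
      = ((∫ v in (0:ℝ)..t, g v) * exp (c * t) - ∫ u in (0:ℝ)..t, g u * exp (c * u)) / c := by
  have hexp (x : ℝ) : HasDerivAt (fun y => exp (c * y) / c) (exp (c * x)) x := by
    simpa [hc] using ((hasDerivAt_id x).const_mul c).exp.div_const c
  have hparts := intervalIntegral.integral_mul_deriv_eq_deriv_mul (a := 0) (b := t)
    (fun x _ => (hg.integral_hasStrictDerivAt 0 x).hasDerivAt) (fun x _ => hexp x)
    (hg.intervalIntegrable _ _)
    ((by fun_prop : Continuous fun x => exp (c * x)).intervalIntegrable _ _)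
  simpa only [mul_div_assoc', intervalIntegral.integral_div, intervalIntegral.integral_same,
    zero_mul, zero_div, sub_zero, ← sub_div] using hparts

section
variable {f : ℝ → ℝ} (hf : Continuous f)
include hf

lemma integral_abs_sub_mul_exp {t u : ℝ} (hu : u ∈ Set.Icc 0 t) :
    ∫ s in (0:ℝ)..t, f |u - s| * exp s
      = exp u * ((∫ v in (0:ℝ)..u, f v * exp (-v)) + ∫ v in (0:ℝ)..(t - u), f v * exp v) := by
  rw [← intervalIntegral.integral_add_adjacent_intervals (b := u)
    (Continuous.intervalIntegrable (by fun_prop) _ _)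
    (Continuous.intervalIntegrable (by fun_prop) _ _), mul_add]
  congr 1
  · rw [intervalIntegral.integral_congr (g := fun s => f (u - s) * exp (1 * s)) fun s hs => by
      rw [Set.uIcc_of_le hu.1] at hs
      simp [abs_of_nonneg (sub_nonneg.2 hs.2)]]
    simpa using integral_comp_sub_mul_exp f 1 u
  · have hshift := intervalIntegral.integral_comp_add_left (fun s => f |u - s| * exp s)
      (a := 0) (b := t - u) u
    simp only [add_zero, add_sub_cancel] at hshift
    rw [← hshift, ← intervalIntegral.integral_const_mul]
    refine intervalIntegral.integral_congr fun x hx => ?_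
    rw [Set.uIcc_of_le (sub_nonneg.2 hu.2)] at hx
    simp [abs_of_nonneg hx.1, exp_add, mul_left_comm]

lemma integral_exp_mul_integral_abs_sub_mul_exp {t : ℝ} (ht : 0 ≤ t) :
    ∫ u in (0:ℝ)..t, exp u * ∫ s in (0:ℝ)..t, f |u - s| * exp s
      = exp (2 * t) * (∫ v in (0:ℝ)..t, f v * exp (-v)) - ∫ v in (0:ℝ)..t, f v * exp v := by
  set N := ∫ v in (0:ℝ)..t, f v * exp (-v)
  set P := ∫ v in (0:ℝ)..t, f v * exp v
  have hN : ∫ u in (0:ℝ)..t, f u * exp u * exp (-2 * u) = N :=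
    intervalIntegral.integral_congr fun u _ => by
      rw [mul_assoc, ← exp_add]
      ring_nf
  have hP : ∫ u in (0:ℝ)..t, f u * exp (-u) * exp (2 * u) = P :=
    intervalIntegral.integral_congr fun u _ => by
      rw [mul_assoc, ← exp_add]
      ring_nf
  have hreflect := integral_comp_sub_mul_exp (fun x => ∫ v in (0:ℝ)..x, f v * exp v) 2 t
  beta_reduce at hreflect
  calc ∫ u in (0:ℝ)..t, exp u * ∫ s in (0:ℝ)..t, f |u - s| * exp s
      = ∫ u in (0:ℝ)..t, (∫ v in (0:ℝ)..u, f v * exp (-v)) * exp (2 * u)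
          + (∫ v in (0:ℝ)..(t - u), f v * exp v) * exp (2 * u) := by
        refine intervalIntegral.integral_congr fun u hu => ?_
        rw [Set.uIcc_of_le ht] at hu
        simp only [integral_abs_sub_mul_exp hf hu, two_mul, exp_add]
        ring
    _ = (N * exp (2 * t) - P) / 2
          + exp (2 * t) * ∫ u in (0:ℝ)..t, (∫ v in (0:ℝ)..u, f v * exp v) * exp (-2 * u) := by
        rw [intervalIntegral.integral_add (Continuous.intervalIntegrable (by fun_prop) _ _)
          (Continuous.intervalIntegrable (by fun_prop) _ _), integral_primitive_mul_exp
          (by fun_prop) two_ne_zero, hP, hreflect]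
    _ = exp (2 * t) * N - P := by
        have hexp : exp (2 * t) * exp (-2 * t) = 1 := by rw [← exp_add]; simp
        rw [integral_primitive_mul_exp (by fun_prop) (by norm_num), hN]
        linear_combination (-P / 2) * hexp

lemma integral_cov_endpoint_mul_exp (t : ℝ) :
    ∫ u in (0:ℝ)..t, 1 / 2 * (f t + f u - f (t - u)) * exp u
      = (f t * (exp t - 1) + (∫ v in (0:ℝ)..t, f v * exp v)
          - exp t * ∫ v in (0:ℝ)..t, f v * exp (-v)) / 2 := by
  rw [intervalIntegral.integral_congr
      (g := fun u => (f t * exp u + f u * exp u - f (t - u) * exp (1 * u)) / 2)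
      fun u _ => by simp only [one_mul]; ring,
    intervalIntegral.integral_div,
    intervalIntegral.integral_sub (Continuous.intervalIntegrable (by fun_prop) _ _)
      (Continuous.intervalIntegrable (by fun_prop) _ _),
    intervalIntegral.integral_add (Continuous.intervalIntegrable (by fun_prop) _ _)
      (Continuous.intervalIntegrable (by fun_prop) _ _),
    intervalIntegral.integral_const_mul, integral_exp, integral_comp_sub_mul_exp]
  simp

lemma integral_cov_mul_exp (u t : ℝ) :
    ∫ s in (0:ℝ)..t, 1 / 2 * (f u + f s - f |u - s|) * exp (u + s)
      = exp u * (f u * (exp t - 1) + (∫ v in (0:ℝ)..t, f v * exp v)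
          - ∫ s in (0:ℝ)..t, f |u - s| * exp s) / 2 := by
  rw [intervalIntegral.integral_congr
      (g := fun s => exp u * (f u * exp s + f s * exp s - f |u - s| * exp s) / 2)
      fun s _ => by simp only [exp_add]; ring,
    intervalIntegral.integral_div, intervalIntegral.integral_const_mul,
    intervalIntegral.integral_sub (Continuous.intervalIntegrable (by fun_prop) _ _)
      (Continuous.intervalIntegrable (by fun_prop) _ _),
    intervalIntegral.integral_add (Continuous.intervalIntegrable (by fun_prop) _ _)
      (Continuous.intervalIntegrable (by fun_prop) _ _),
    intervalIntegral.integral_const_mul, integral_exp, exp_zero]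

lemma integral_integral_cov_mul_exp {t : ℝ} (ht : 0 ≤ t) :
    ∫ u in (0:ℝ)..t, ∫ s in (0:ℝ)..t, 1 / 2 * (f u + f s - f |u - s|) * exp (u + s)
      = ((2 * exp t - 1) * (∫ v in (0:ℝ)..t, f v * exp v)
          - exp (2 * t) * ∫ v in (0:ℝ)..t, f v * exp (-v)) / 2 := by
  simp_rw [integral_cov_mul_exp hf]
  rw [intervalIntegral.integral_div,
    intervalIntegral.integral_congr
      (g := fun u => (exp t - 1) * (f u * exp u) + (∫ v in (0:ℝ)..t, f v * exp v) * exp u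
        - exp u * ∫ s in (0:ℝ)..t, f |u - s| * exp s)
      fun u _ => by ring,
    intervalIntegral.integral_sub (Continuous.intervalIntegrable (by fun_prop) _ _)
      (Continuous.intervalIntegrable (by fun_prop) _ _),
    intervalIntegral.integral_add (Continuous.intervalIntegrable (by fun_prop) _ _)
      (Continuous.intervalIntegrable (by fun_prop) _ _),
    intervalIntegral.integral_const_mul, intervalIntegral.integral_const_mul, integral_exp,
    exp_zero, integral_exp_mul_integral_abs_sub_mul_exp hf ht]
  ring

lemma integral_mul_exp_neg_sub_exp (t : ℝ) :
    ∫ u in (0:ℝ)..t, f u * (exp (-u) - exp (u - 2 * t))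
      = (∫ v in (0:ℝ)..t, f v * exp (-v)) - exp (-(2 * t)) * ∫ v in (0:ℝ)..t, f v * exp v := by
  rw [intervalIntegral.integral_congr
      (g := fun u => f u * exp (-u) - exp (-(2 * t)) * (f u * exp u))
      fun u _ => by simp only [sub_eq_add_neg u, exp_add]; ring,
    intervalIntegral.integral_sub (Continuous.intervalIntegrable (by fun_prop) _ _)
      (Continuous.intervalIntegrable (by fun_prop) _ _),
    intervalIntegral.integral_const_mul]

theorem ou_variance_identity_of_continuous {t : ℝ} (ht : 0 ≤ t) :
    f t
      - 2 * exp (-t) * (∫ u in (0:ℝ)..t, 1 / 2 * (f t + f u - f (t - u)) * exp u)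
      + exp (-(2 * t)) * (∫ u in (0:ℝ)..t, ∫ s in (0:ℝ)..t,
          1 / 2 * (f u + f s - f |u - s|) * exp (u + s))
      = f t * exp (-t) + 1 / 2 * ∫ u in (0:ℝ)..t, f u * (exp (-u) - exp (u - 2 * t)) := by
  have hsq : exp (2 * t) = exp t * exp t := by rw [two_mul, exp_add]
  rw [integral_cov_endpoint_mul_exp hf, integral_integral_cov_mul_exp hf ht,
    integral_mul_exp_neg_sub_exp hf, exp_neg, exp_neg, hsq]
  field_simp
  ring

end

theorem fOU_variance_identity (H t : ℝ) (hH : 0 < H) (ht : 0 ≤ t) :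
    t ^ (2 * H)
      - 2 * Real.exp (-t) * (∫ u in (0:ℝ)..t,
          (1 / 2) * (t ^ (2 * H) + u ^ (2 * H) - (t - u) ^ (2 * H)) * Real.exp u)
      + Real.exp (-(2 * t)) * (∫ u in (0:ℝ)..t, ∫ s in (0:ℝ)..t,
          (1 / 2) * (u ^ (2 * H) + s ^ (2 * H) - |u - s| ^ (2 * H)) * Real.exp (u + s))
      = t ^ (2 * H) * Real.exp (-t)
        + (1 / 2) * ∫ u in (0:ℝ)..t, u ^ (2 * H) * (Real.exp (-u) - Real.exp (u - 2 * t)) :=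
  ou_variance_identity_of_continuous (continuous_rpow_const (by positivity)) ht
end
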